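/- arXiv:2209.10105 — 5 statements merged into one kernel-verified Lean document; each statement's English description precedes it below -/
import Mathlib

section
/- Let K ≥ 1, let Π be an N×N symmetric doubly stochastic matrix with second-largest eigenvalue modulus λ < 1, and suppose the sequence x_{k+1} = Πx_k − α_k g_k in ℝ^N satisfies ‖g_k‖ ≤ G for all k, with x_1 having equal coordinates. Let x̂_k = (1/N)11ᵀx_k denote the coordinate-average vector. Then for all k ≥ 1, ‖x_k − x̂_k‖ ≤ G ∑_{s=1}^{k-1} α_s λ^{k-1-s}. -/
/-!
Write `d_k = x_k - x̂_k` for the disagreement vector. Since `Π` is doubly stochastic it fixes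
constant vectors and preserves coordinate sums, so `d_{k+1} = Π d_k - α_k (g_k - ĝ_k)` with
`d_k` in the zero-sum hyperplane `1ᗮ`. That hyperplane is invariant under the symmetric
operator `Π`, and the eigenvalues of the restriction are eigenvalues of `Π` with zero-sum
eigenvectors, so the spectral theorem gives `‖Π d‖ ≤ λ ‖d‖` there. Removing the mean is an
orthogonal projection, so `‖g_k - ĝ_k‖ ≤ G`, whence `‖d_{k+1}‖ ≤ λ ‖d_k‖ + α_k G` with
`d_1 = 0`; unrolling this recursion gives the bound.
-/

open Finset

theorem le_sum_mul_pow_of_le_mul_add {u b : ℕ → ℝ} {lam : ℝ} (hlam : 0 ≤ lam) (h₁ : u 1 ≤ 0)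
    (hstep : ∀ k, 1 ≤ k → u (k + 1) ≤ lam * u k + b k) :
    ∀ k, 1 ≤ k → u k ≤ ∑ s ∈ Icc 1 (k - 1), b s * lam ^ (k - 1 - s) := by
  intro k hk
  induction k, hk using Nat.le_induction with
  | base => simpa using h₁
  | succ k hk ih =>
    have hsplit : ∑ s ∈ Icc 1 k, b s * lam ^ (k - s) =
        lam * ∑ s ∈ Icc 1 (k - 1), b s * lam ^ (k - 1 - s) + b k := by
      obtain ⟨m, rfl⟩ : ∃ m, k = m + 1 := ⟨k - 1, by omega⟩
      rw [sum_Icc_succ_top (by omega), mul_sum, Nat.sub_self, pow_zero, mul_one]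
      congr 1
      refine sum_congr rfl fun s hs => ?_
      rw [show m + 1 - s = m - s + 1 by grind, pow_succ]
      simp only [Nat.add_sub_cancel]
      ring
    calc u (k + 1) ≤ lam * u k + b k := hstep k hk
      _ ≤ lam * ∑ s ∈ Icc 1 (k - 1), b s * lam ^ (k - 1 - s) + b k := by gcongr
      _ = _ := by simpa using hsplit.symm

theorem LinearMap.IsSymmetric.norm_apply_le {𝕜 E : Type*} [RCLike 𝕜] [NormedAddCommGroup E]
    [InnerProductSpace 𝕜 E] [FiniteDimensional 𝕜 E] {T : E →ₗ[𝕜] E} (hT : T.IsSymmetric)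
    {lam : ℝ} (hlam : 0 ≤ lam) (heig : ∀ μ : 𝕜, Module.End.HasEigenvalue T μ → ‖μ‖ ≤ lam)
    (v : E) : ‖T v‖ ≤ lam * ‖v‖ := by
  let b := hT.eigenvectorBasis rfl
  have hμ : ∀ i, |hT.eigenvalues rfl i| ≤ lam := fun i => by
    simpa using heig _ (hT.hasEigenvalue_eigenvalues rfl i)
  rw [← b.repr.norm_map, ← b.repr.norm_map v, ← pow_le_pow_iff_left₀ (norm_nonneg _)
    (by positivity) two_ne_zero, mul_pow, EuclideanSpace.norm_sq_eq, EuclideanSpace.norm_sq_eq,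
    mul_sum]
  refine sum_le_sum fun i _ => ?_
  rw [hT.eigenvectorBasis_apply_self_apply, norm_mul, mul_pow, RCLike.norm_ofReal]
  gcongr
  exact hμ i

section Consensus

variable {ι : Type*} [Fintype ι]

noncomputable def ensembleAvg : EuclideanSpace ℝ ι →ₗ[ℝ] EuclideanSpace ℝ ι where
  toFun v := WithLp.toLp 2 fun _ => (∑ j, v j) / Fintype.card ι
  map_add' v w := by ext; simp [sum_add_distrib, add_div]
  map_smul' c v := by ext; simp [← mul_sum, mul_div_assoc]

theorem ensembleAvg_apply (v : EuclideanSpace ℝ ι) (i : ι) :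
    ensembleAvg v i = (∑ j, v j) / Fintype.card ι := rfl

theorem sum_ensembleAvg (v : EuclideanSpace ℝ ι) : ∑ i, ensembleAvg v i = ∑ i, v i := by
  cases isEmpty_or_nonempty ι
  · simp
  · simp [ensembleAvg_apply, mul_div_cancel₀]

theorem sum_sub_ensembleAvg (v : EuclideanSpace ℝ ι) : ∑ i, (v - ensembleAvg v) i = 0 := by
  simp [sum_sub_distrib, sum_ensembleAvg]

theorem ensembleAvg_eq_self {v : EuclideanSpace ℝ ι} (hv : ∀ i j, v i = v j) :
    ensembleAvg v = v := by
  ext i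
  have : (Fintype.card ι : ℝ) ≠ 0 := by
    have : Nonempty ι := ⟨i⟩
    positivity
  simp [ensembleAvg_apply, hv _ i, this]

theorem inner_sub_ensembleAvg_ensembleAvg (v : EuclideanSpace ℝ ι) :
    inner ℝ (v - ensembleAvg v) (ensembleAvg v) = 0 := by
  simp only [PiLp.inner_apply, RCLike.inner_apply, conj_trivial, ensembleAvg_apply (v := v)]
  rw [← mul_sum]
  exact mul_eq_zero_of_right _ (sum_sub_ensembleAvg v)

theorem norm_sub_ensembleAvg_le (v : EuclideanSpace ℝ ι) : ‖v - ensembleAvg v‖ ≤ ‖v‖ := by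
  have := norm_add_sq_eq_norm_sq_add_norm_sq_real (inner_sub_ensembleAvg_ensembleAvg v)
  rw [sub_add_cancel] at this
  nlinarith [norm_nonneg v, norm_nonneg (v - ensembleAvg v), sq_nonneg ‖ensembleAvg v‖]

def sumZeroSubspace (ι : Type*) [Fintype ι] : Submodule ℝ (EuclideanSpace ℝ ι) where
  carrier := {v | ∑ i, v i = 0}
  add_mem' ha hb := by simp_all [sum_add_distrib]
  zero_mem' := by simp
  smul_mem' c v hv := by simp_all [← mul_sum]

theorem mem_sumZeroSubspace {v : EuclideanSpace ℝ ι} : v ∈ sumZeroSubspace ι ↔ ∑ i, v i = 0 := by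
  simp [sumZeroSubspace]

variable [DecidableEq ι] {P : Matrix ι ι ℝ}

theorem sum_toEuclideanLin_apply (hcol : ∀ j, ∑ i, P i j = 1) (v : EuclideanSpace ℝ ι) :
    ∑ i, Matrix.toEuclideanLin P v i = ∑ i, v i := by
  simp [Matrix.mulVec, dotProduct, sum_comm (γ := ι), ← sum_mul, hcol]

theorem ensembleAvg_toEuclideanLin (hcol : ∀ j, ∑ i, P i j = 1) (v : EuclideanSpace ℝ ι) :
    ensembleAvg (Matrix.toEuclideanLin P v) = ensembleAvg v := by
  ext i
  simp only [ensembleAvg_apply, sum_toEuclideanLin_apply hcol]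

theorem toEuclideanLin_ensembleAvg (hrow : ∀ i, ∑ j, P i j = 1) (v : EuclideanSpace ℝ ι) :
    Matrix.toEuclideanLin P (ensembleAvg v) = ensembleAvg v := by
  ext i
  simp [Matrix.mulVec, dotProduct, ensembleAvg_apply, ← sum_mul, hrow]

theorem norm_toEuclideanLin_le_of_sum_eq_zero (hsymm : P.IsSymm) (hcol : ∀ j, ∑ i, P i j = 1)
    {lam : ℝ} (hlam : 0 ≤ lam)
    (heig : ∀ (μ : ℝ) (v : ι → ℝ), v ≠ 0 → P.mulVec v = μ • v → ∑ i, v i = 0 → |μ| ≤ lam)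
    {v : EuclideanSpace ℝ ι} (hv : ∑ i, v i = 0) :
    ‖Matrix.toEuclideanLin P v‖ ≤ lam * ‖v‖ := by
  have hS : ∀ w ∈ sumZeroSubspace ι, Matrix.toEuclideanLin P w ∈ sumZeroSubspace ι := by
    simp only [mem_sumZeroSubspace, sum_toEuclideanLin_apply hcol, imp_self, implies_true]
  have hT : (Matrix.toEuclideanLin P).IsSymmetric :=
    Matrix.isSymmetric_toEuclideanLin_iff.mpr (Matrix.isHermitian_iff_isSymm.mpr hsymm)
  refine LinearMap.IsSymmetric.norm_apply_le (hT.restrict_invariant hS) hlam (fun μ hμ => ?_)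
    ⟨v, mem_sumZeroSubspace.mpr hv⟩
  obtain ⟨w, hw, hw0⟩ := hμ.exists_hasEigenvector
  rw [Module.End.mem_eigenspace_iff] at hw
  refine Real.norm_eq_abs μ ▸ heig μ (w : EuclideanSpace ℝ ι) ?_ ?_ (mem_sumZeroSubspace.mp w.2)
  · exact fun h => hw0 (Subtype.ext (WithLp.ofLp_injective 2 h))
  · exact congrArg (fun u : sumZeroSubspace ι => WithLp.ofLp (u : EuclideanSpace ℝ ι)) hw

theorem sub_ensembleAvg_toEuclideanLin_sub_smul (hrow : ∀ i, ∑ j, P i j = 1)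
    (hcol : ∀ j, ∑ i, P i j = 1) (x g : EuclideanSpace ℝ ι) (a : ℝ) :
    Matrix.toEuclideanLin P x - a • g - ensembleAvg (Matrix.toEuclideanLin P x - a • g) =
      Matrix.toEuclideanLin P (x - ensembleAvg x) - a • (g - ensembleAvg g) := by
  rw [map_sub, map_sub, map_smul, ensembleAvg_toEuclideanLin hcol,
    toEuclideanLin_ensembleAvg hrow, smul_sub]
  abel

end Consensus

theorem stmt_9_general (N : ℕ)
    (P : Matrix (Fin N) (Fin N) ℝ) (hsymm : P.IsSymm)
    (hrow : ∀ i, ∑ j, P i j = 1) (hcol : ∀ j, ∑ i, P i j = 1)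
    (lam : ℝ) (hlam0 : 0 ≤ lam)
    (heig : ∀ (μ : ℝ) (v : Fin N → ℝ), v ≠ 0 → P.mulVec v = μ • v →
      (∑ i, v i) = 0 → |μ| ≤ lam)
    (G : ℝ) (α : ℕ → ℝ) (hα : ∀ k, 0 < α k)
    (x g : ℕ → EuclideanSpace ℝ (Fin N))
    (hg : ∀ k, ‖g k‖ ≤ G)
    (hrec : ∀ k, 1 ≤ k →
      x (k + 1) = (WithLp.equiv 2 (Fin N → ℝ)).symm
        (P.mulVec (WithLp.equiv 2 (Fin N → ℝ) (x k))) - α k • g k)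
    (hinit : ∀ i j, x 1 i = x 1 j) :
    ∀ k, 1 ≤ k →
      ‖x k - ((WithLp.equiv 2 (Fin N → ℝ)).symm fun _ => (∑ j, x k j) / N)‖ ≤
        G * ∑ s ∈ Finset.Icc 1 (k - 1), α s * lam ^ (k - 1 - s) := by
  have hstep : ∀ k, 1 ≤ k → ‖x (k + 1) - ensembleAvg (x (k + 1))‖ ≤
      lam * ‖x k - ensembleAvg (x k)‖ + α k * G := by
    intro k hk
    rw [show x (k + 1) = Matrix.toEuclideanLin P (x k) - α k • g k from hrec k hk,
      sub_ensembleAvg_toEuclideanLin_sub_smul hrow hcol]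
    refine (norm_sub_le _ _).trans (add_le_add ?_ ?_)
    · exact norm_toEuclideanLin_le_of_sum_eq_zero hsymm hcol hlam0 heig (sum_sub_ensembleAvg _)
    · rw [norm_smul, Real.norm_of_nonneg (hα k).le]
      exact mul_le_mul_of_nonneg_left ((norm_sub_ensembleAvg_le _).trans (hg k)) (hα k).le
  have hx₁ : ‖x 1 - ensembleAvg (x 1)‖ ≤ 0 := by
    rw [ensembleAvg_eq_self hinit, sub_self, norm_zero]
  intro k hk
  have hbound := le_sum_mul_pow_of_le_mul_add (u := fun k => ‖x k - ensembleAvg (x k)‖)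
    hlam0 hx₁ hstep k hk
  rw [mul_sum]
  convert hbound using 2
  · ext; simp [ensembleAvg_apply]
  · ring

theorem stmt_9 (N : ℕ) (hN : 0 < N) (K : ℕ) (hK : 1 ≤ K)
    (P : Matrix (Fin N) (Fin N) ℝ) (hsymm : P.IsSymm) (hnonneg : ∀ i j, 0 ≤ P i j)
    (hrow : ∀ i, ∑ j, P i j = 1) (hcol : ∀ j, ∑ i, P i j = 1)
    (lam : ℝ) (hlam0 : 0 ≤ lam) (hlam1 : lam < 1)
    (heig : ∀ (μ : ℝ) (v : Fin N → ℝ), v ≠ 0 → P.mulVec v = μ • v →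
      (∑ i, v i) = 0 → |μ| ≤ lam)
    (G : ℝ) (α : ℕ → ℝ) (hα : ∀ k, 0 < α k)
    (x g : ℕ → EuclideanSpace ℝ (Fin N))
    (hg : ∀ k, ‖g k‖ ≤ G)
    (hrec : ∀ k, 1 ≤ k →
      x (k + 1) = (WithLp.equiv 2 (Fin N → ℝ)).symm
        (P.mulVec (WithLp.equiv 2 (Fin N → ℝ) (x k))) - α k • g k)
    (hinit : ∀ i j, x 1 i = x 1 j) :
    ∀ k, 1 ≤ k →
      ‖x k - ((WithLp.equiv 2 (Fin N → ℝ)).symm fun _ => (∑ j, x k j) / N)‖ ≤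
        G * ∑ s ∈ Finset.Icc 1 (k - 1), α s * lam ^ (k - 1 - s) :=
  stmt_9_general N P hsymm hrow hcol lam hlam0 heig G α hα x g hg hrec hinit
end

section
/- Let X ⊆ ℝ^d be a nonempty closed convex set, let μ > 0, C > 0, and let f_1, …, f_K be differentiable functions on ℝ^d that are μ-strongly convex, meaning f_k(y) ≥ f_k(x) + ∇f_k(x)ᵀ(y − x) + (μ/2)‖y − x‖² for all x, y. Suppose x_{k+1} = P_X(x_k − α_k ∇f_k(x_k)) with α_k = 1/(μk) and ‖∇f_k(x_k)‖ ≤ C for all k. Then for every x* ∈ X, ∑_{k=1}^K f_k(x_k) − ∑_{k=1}^K f_k(x*) ≤ (C²/(2μ))(1 + ln K). -/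
/-!
Projected gradient descent with steps `α_k = 1/(μk)`. Projection onto a convex set does not
increase the distance to any point of the set, so expanding `‖x_k - α_k g_k - x*‖²` gives
`2α_k⟪g_k, x_k - x*⟫ ≤ ‖x_k - x*‖² - ‖x_{k+1} - x*‖² + α_k²‖g_k‖²`. Strong convexity turns
`⟪g_k, x_k - x*⟫` into an upper bound for `f_k(x_k) - f_k(x*) + (μ/2)‖x_k - x*‖²`, and with
this step size the distance terms telescope through the potential `Φ_k = μ(k-1)/2 ‖x_k - x*‖²`,
leaving `(C²/2μ) ∑ 1/k ≤ (C²/2μ)(1 + ln K)`.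
-/

open Finset

section Projection

variable {F : Type*} [NormedAddCommGroup F] [InnerProductSpace ℝ F] {X : Set F} {z p y : F}

lemma Convex.inner_sub_nearest_nonpos (hX : Convex ℝ X) (hp : p ∈ X)
    (hmin : ∀ w ∈ X, ‖p - z‖ ≤ ‖w - z‖) (hy : y ∈ X) : inner ℝ (z - p) (y - p) ≤ 0 := by
  refine (norm_eq_iInf_iff_real_inner_le_zero hX hp).mp ?_ y hy
  have : Nonempty X := ⟨⟨p, hp⟩⟩
  have hbdd : BddBelow (Set.range fun w : X => ‖z - w‖) :=
    ⟨0, by rintro _ ⟨w, rfl⟩; exact norm_nonneg _⟩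
  refine le_antisymm (le_ciInf fun w => ?_) (ciInf_le hbdd ⟨p, hp⟩)
  rw [norm_sub_rev, norm_sub_rev z]
  exact hmin w w.2

lemma Convex.norm_sub_nearest_le (hX : Convex ℝ X) (hp : p ∈ X)
    (hmin : ∀ w ∈ X, ‖p - z‖ ≤ ‖w - z‖) (hy : y ∈ X) : ‖p - y‖ ≤ ‖z - y‖ := by
  have hobtuse := hX.inner_sub_nearest_nonpos hp hmin hy
  have hsplit : ‖z - y‖ ^ 2 = ‖z - p‖ ^ 2 - 2 * inner ℝ (z - p) (y - p) + ‖p - y‖ ^ 2 := by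
    rw [← sub_add_sub_cancel z p y, norm_add_sq_real, ← neg_sub y p, inner_neg_right]
    ring
  refine (pow_le_pow_iff_left₀ (norm_nonneg _) (norm_nonneg _) two_ne_zero).mp ?_
  nlinarith [sq_nonneg ‖z - p‖]

lemma Convex.inner_le_of_projected_step (hX : Convex ℝ X) {x G : F} {α : ℝ} (hp : p ∈ X)
    (hmin : ∀ w ∈ X, ‖p - (x - α • G)‖ ≤ ‖w - (x - α • G)‖) (hy : y ∈ X) :
    2 * α * inner ℝ G (x - y) ≤ ‖x - y‖ ^ 2 - ‖p - y‖ ^ 2 + α ^ 2 * ‖G‖ ^ 2 := by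
  have hproj := pow_le_pow_left₀ (norm_nonneg _) (hX.norm_sub_nearest_le hp hmin hy) 2
  have hexpand :
      ‖x - α • G - y‖ ^ 2 = ‖x - y‖ ^ 2 - 2 * α * inner ℝ G (x - y) + α ^ 2 * ‖G‖ ^ 2 := by
    rw [sub_right_comm, norm_sub_sq_real, real_inner_smul_right, real_inner_comm, norm_smul,
      Real.norm_eq_abs, mul_pow, sq_abs]
    ring
  linarith

lemma Convex.sub_le_of_strongly_convex_projected_step (hX : Convex ℝ X) {f : F → ℝ}
    {x G : F} {μ α : ℝ} (hα : 0 < α)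
    (hsc : f x + inner ℝ G (y - x) + μ / 2 * ‖y - x‖ ^ 2 ≤ f y) (hp : p ∈ X)
    (hmin : ∀ w ∈ X, ‖p - (x - α • G)‖ ≤ ‖w - (x - α • G)‖) (hy : y ∈ X) :
    f x - f y ≤ (α⁻¹ - μ) / 2 * ‖x - y‖ ^ 2 - α⁻¹ / 2 * ‖p - y‖ ^ 2 + α / 2 * ‖G‖ ^ 2 := by
  have hstep := hX.inner_le_of_projected_step hp hmin hy
  rw [← neg_sub x y, inner_neg_right, norm_neg] at hsc
  have hinner : inner ℝ G (x - y) ≤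
      α⁻¹ / 2 * (‖x - y‖ ^ 2 - ‖p - y‖ ^ 2) + α / 2 * ‖G‖ ^ 2 := by
    have hscaled : 2 * α * (α⁻¹ / 2 * (‖x - y‖ ^ 2 - ‖p - y‖ ^ 2) + α / 2 * ‖G‖ ^ 2) =
        ‖x - y‖ ^ 2 - ‖p - y‖ ^ 2 + α ^ 2 * ‖G‖ ^ 2 := by
      field_simp
    exact (mul_le_mul_iff_of_pos_left (by positivity)).mp (hstep.trans_eq hscaled.symm)
  linarith

end Projection

lemma sum_Icc_inv_le_one_add_log (K : ℕ) : ∑ k ∈ Icc 1 K, (k : ℝ)⁻¹ ≤ 1 + Real.log K := by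
  simpa [harmonic_eq_sum_Icc] using harmonic_le_one_add_log K

lemma sum_Icc_sub_telescope (Φ : ℕ → ℝ) (K : ℕ) :
    ∑ k ∈ Icc 1 K, (Φ (k + 1) - Φ k) = Φ (K + 1) - Φ 1 := by
  rw [← Ico_add_one_right_eq_Icc, sum_Ico_sub Φ (by omega)]

theorem stmt_11_general (d K : ℕ)
    (X : Set (EuclideanSpace ℝ (Fin d)))
    (hXconv : Convex ℝ X)
    (μ C : ℝ) (hμ : 0 < μ)
    (f : ℕ → EuclideanSpace ℝ (Fin d) → ℝ)
    (g : ℕ → EuclideanSpace ℝ (Fin d) → EuclideanSpace ℝ (Fin d))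
    (hsc : ∀ k y z, f k y + inner ℝ (g k y) (z - y) + μ / 2 * ‖z - y‖ ^ 2 ≤ f k z)
    (x : ℕ → EuclideanSpace ℝ (Fin d))
    (hgb : ∀ k ∈ Finset.Icc 1 K, ‖g k (x k)‖ ≤ C)
    (hproj : ∀ k ∈ Finset.Icc 1 K, x (k + 1) ∈ X ∧
      ∀ y ∈ X, ‖x (k + 1) - (x k - (1 / (μ * k)) • g k (x k))‖ ≤
        ‖y - (x k - (1 / (μ * k)) • g k (x k))‖) :
    ∀ xs ∈ X,
      ∑ k ∈ Finset.Icc 1 K, f k (x k) - ∑ k ∈ Finset.Icc 1 K, f k xs ≤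
        C ^ 2 / (2 * μ) * (1 + Real.log K) := by
  intro xs hxs
  set Φ : ℕ → ℝ := fun k => μ / 2 * ((k : ℝ) - 1) * ‖x k - xs‖ ^ 2 with hΦ
  have hstep : ∀ k ∈ Icc 1 K,
      f k (x k) - f k xs + (Φ (k + 1) - Φ k) ≤ C ^ 2 / (2 * μ) * (k : ℝ)⁻¹ := by
    intro k hk
    have hkpos : (0 : ℝ) < k := by exact_mod_cast (mem_Icc.mp hk).1
    obtain ⟨hpX, hmin⟩ := hproj k hk
    have h := hXconv.sub_le_of_strongly_convex_projected_step (by positivity)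
      (hsc k (x k) xs) hpX hmin hxs
    have hG : (μ * k)⁻¹ / 2 * ‖g k (x k)‖ ^ 2 ≤ C ^ 2 / (2 * μ) * (k : ℝ)⁻¹ := by
      rw [show C ^ 2 / (2 * μ) * (k : ℝ)⁻¹ = (μ * k)⁻¹ / 2 * C ^ 2 by field_simp]
      gcongr
      exact hgb k hk
    rw [one_div, inv_inv] at h
    simp only [hΦ, Nat.cast_add_one]
    linarith
  have hsum := sum_le_sum hstep
  rw [sum_add_distrib, sum_Icc_sub_telescope, ← mul_sum, sum_sub_distrib] at hsum
  have hΦ1 : Φ 1 = 0 := by simp [hΦ]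
  have hΦK : 0 ≤ Φ (K + 1) := by
    simp only [hΦ, Nat.cast_add_one, add_sub_cancel_right]
    positivity
  have hlog := mul_le_mul_of_nonneg_left (sum_Icc_inv_le_one_add_log K)
    (by positivity : 0 ≤ C ^ 2 / (2 * μ))
  linarith

theorem stmt_11 (d K : ℕ) (hK : 1 ≤ K)
    (X : Set (EuclideanSpace ℝ (Fin d))) (hXne : X.Nonempty) (hXcl : IsClosed X)
    (hXconv : Convex ℝ X)
    (μ C : ℝ) (hμ : 0 < μ) (hC : 0 < C)
    (f : ℕ → EuclideanSpace ℝ (Fin d) → ℝ)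
    (g : ℕ → EuclideanSpace ℝ (Fin d) → EuclideanSpace ℝ (Fin d))
    (hgrad : ∀ k y, HasGradientAt (f k) (g k y) y)
    (hsc : ∀ k y z, f k y + inner ℝ (g k y) (z - y) + μ / 2 * ‖z - y‖ ^ 2 ≤ f k z)
    (x : ℕ → EuclideanSpace ℝ (Fin d))
    (hmem : ∀ k ∈ Finset.Icc 1 K, x k ∈ X)
    (hgb : ∀ k ∈ Finset.Icc 1 K, ‖g k (x k)‖ ≤ C)
    (hproj : ∀ k ∈ Finset.Icc 1 K, x (k + 1) ∈ X ∧
      ∀ y ∈ X, ‖x (k + 1) - (x k - (1 / (μ * k)) • g k (x k))‖ ≤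
        ‖y - (x k - (1 / (μ * k)) • g k (x k))‖) :
    ∀ xs ∈ X,
      ∑ k ∈ Finset.Icc 1 K, f k (x k) - ∑ k ∈ Finset.Icc 1 K, f k xs ≤
        C ^ 2 / (2 * μ) * (1 + Real.log K) :=
  stmt_11_general d K X hXconv μ C hμ f g hsc x hgb hproj
end

section
/- Let X ⊆ ℝ^d be a nonempty closed convex set with ‖x − y‖ ≤ D' for all x, y ∈ X (Euclidean norm), let C > 0, and let convex differentiable f_1, …, f_K with comparator points x*_1, …, x*_K ∈ X satisfying ∑_{k=1}^{K-1} ‖x*_k − x*_{k+1}‖ ≤ P_K. Suppose x_{k+1} = P_X(x_k − α∇f_k(x_k)) with ‖∇f_k(x_k)‖ ≤ C for all k and α = √(D'(D' + 3P_K))/(C√K). Then ∑_{k=1}^K f_k(x_k) − ∑_{k=1}^K f_k(x*_k) ≤ C√(K·D'(D' + 3P_K)). -/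
/-!
Convexity bounds each loss gap `f_k(x_k) - f_k(x*_k)` by the linear gap `⟪∇f_k(x_k), x_k - x*_k⟫`.
Since the projection onto a convex set does not increase distances to points of the set, one step
of projected gradient descent gives
`2α⟪g_k, x_k - x*_k⟫ ≤ ‖x_k - x*_k‖² - ‖x_{k+1} - x*_k‖² + α²C²`.
Replacing `x*_k` by `x*_{k+1}` in the subtracted term costs at most `2D'‖x*_k - x*_{k+1}‖`, so the
sum telescopes to at most `D'² + 2D'P_K`, and the regret is at most `(D'² + 3D'P_K)/(2α) + KαC²/2`,
which the chosen `α` balances to `C√(K D'(D' + 3P_K))`.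
-/

open Finset
open scoped RealInnerProductSpace

theorem sq_norm_sub_le_sq_norm_sub_add {E : Type*} [SeminormedAddGroup E] {u v w : E} {D : ℝ}
    (hv : ‖u - v‖ ≤ D) (hw : ‖u - w‖ ≤ D) :
    ‖u - w‖ ^ 2 ≤ ‖u - v‖ ^ 2 + 2 * D * ‖v - w‖ := by
  have htri := norm_sub_le_norm_sub_add_norm_sub u v w
  have hsum : 0 ≤ ‖u - w‖ + ‖u - v‖ := by positivity
  nlinarith [mul_nonneg (sub_nonneg.2 htri) hsum,
    mul_nonneg (norm_nonneg (v - w)) (sub_nonneg.2 hv),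
    mul_nonneg (norm_nonneg (v - w)) (sub_nonneg.2 hw)]

theorem sum_Icc_sub_le_of_le_add (a b c : ℕ → ℝ) (n : ℕ)
    (h : ∀ k ∈ Icc 1 n, a (k + 1) ≤ b k + c k) :
    ∑ k ∈ Icc 1 (n + 1), (a k - b k) ≤ a 1 - b (n + 1) + ∑ k ∈ Icc 1 n, c k := by
  induction n with
  | zero => simp
  | succ n ih =>
    have hprev := ih fun k hk => h k (Icc_subset_Icc_right n.le_succ hk)
    have hlast := h (n + 1) (by simp)
    rw [sum_Icc_succ_top (b := n + 1) (by omega), sum_Icc_succ_top (b := n) (by omega) c]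
    linarith

section InnerProductSpace

variable {E : Type*} [NormedAddCommGroup E] [InnerProductSpace ℝ E]

theorem ConvexOn.sub_le_inner_of_hasGradientAt [CompleteSpace E] {S : Set E} {f : E → ℝ}
    {g x y : E} (hf : ConvexOn ℝ S f) (hx : x ∈ S) (hy : y ∈ S) (hg : HasGradientAt f g x) :
    f x - f y ≤ ⟪g, x - y⟫ := by
  have hline : HasDerivAt (f ∘ AffineMap.lineMap (k := ℝ) x y) ⟪g, y - x⟫ 0 := by
    have hf' : HasFDerivAt f (InnerProductSpace.toDual ℝ E g)
        (AffineMap.lineMap (k := ℝ) x y 0) := by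
      simpa using hg.hasFDerivAt
    exact hf'.comp_hasDerivAt 0 AffineMap.hasDerivAt_lineMap
  have hslope := (hf.comp_affineMap (AffineMap.lineMap x y)).le_slope_of_hasDerivAt
    (x := 0) (y := 1) (by simpa using hx) (by simpa using hy) one_pos hline
  have hneg : ⟪g, x - y⟫ = -⟪g, y - x⟫ := by rw [← inner_neg_right, neg_sub]
  simp only [slope_def_field, Function.comp_apply, AffineMap.lineMap_apply_one,
    AffineMap.lineMap_apply_zero, sub_zero, div_one] at hslope
  linarith

theorem norm_sub_le_norm_sub_of_isMinOn {X : Set E} {p y z : E} (hX : Convex ℝ X)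
    (hp : p ∈ X) (hmin : IsMinOn (‖· - z‖) X p) (hy : y ∈ X) : ‖p - y‖ ≤ ‖z - y‖ := by
  have hmin' : IsMinOn (fun w => ‖z - w‖) X p := by simpa only [norm_sub_rev z] using hmin
  have hobtuse : ⟪z - p, y - p⟫ ≤ 0 :=
    (norm_eq_iInf_iff_real_inner_le_zero hX hp).1 (hmin'.iInf_eq hp).symm y hy
  have hexpand : ‖z - y‖ ^ 2 = ‖z - p‖ ^ 2 - 2 * ⟪z - p, y - p⟫ + ‖p - y‖ ^ 2 := by
    rw [← sub_sub_sub_cancel_right z y p, norm_sub_sq_real, norm_sub_rev p y]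
  refine (pow_le_pow_iff_left₀ (norm_nonneg _) (norm_nonneg _) two_ne_zero).1 ?_
  nlinarith [sq_nonneg ‖z - p‖]

theorem two_mul_inner_le_of_isMinOn {X : Set E} {p x y G : E} {α : ℝ} (hX : Convex ℝ X)
    (hp : p ∈ X) (hmin : IsMinOn (‖· - (x - α • G)‖) X p) (hy : y ∈ X) :
    2 * α * ⟪G, x - y⟫ ≤ ‖x - y‖ ^ 2 - ‖p - y‖ ^ 2 + α ^ 2 * ‖G‖ ^ 2 := by
  have hstep := norm_sub_le_norm_sub_of_isMinOn hX hp hmin hy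
  have hexpand :
      ‖x - α • G - y‖ ^ 2 = ‖x - y‖ ^ 2 - 2 * α * ⟪G, x - y⟫ + α ^ 2 * ‖G‖ ^ 2 := by
    rw [sub_right_comm, norm_sub_sq_real, real_inner_smul_right, norm_smul, real_inner_comm,
      mul_pow, Real.norm_eq_abs, sq_abs]
    ring
  nlinarith [pow_le_pow_left₀ (norm_nonneg _) hstep 2]

theorem sum_inner_le_of_isMinOn {X : Set E} {x xs G : ℕ → E} {α C D : ℝ} {K : ℕ} (hK : 1 ≤ K)
    (hX : Convex ℝ X) (hdiam : ∀ u ∈ X, ∀ v ∈ X, ‖u - v‖ ≤ D) (hα : 0 < α) (hx₁ : x 1 ∈ X)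
    (hxs : ∀ k ∈ Icc 1 K, xs k ∈ X) (hG : ∀ k ∈ Icc 1 K, ‖G k‖ ≤ C)
    (hproj : ∀ k ∈ Icc 1 K, x (k + 1) ∈ X ∧ IsMinOn (‖· - (x k - α • G k)‖) X (x (k + 1))) :
    ∑ k ∈ Icc 1 K, ⟪G k, x k - xs k⟫ ≤
      (D ^ 2 + 2 * D * ∑ k ∈ Icc 1 (K - 1), ‖xs k - xs (k + 1)‖) / (2 * α) +
        K * (α * C ^ 2 / 2) := by
  obtain ⟨n, rfl⟩ : ∃ n, K = n + 1 := ⟨K - 1, by omega⟩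
  rw [Nat.add_sub_cancel]
  have hstep : ∀ k ∈ Icc 1 (n + 1), ⟪G k, x k - xs k⟫ ≤
      (‖x k - xs k‖ ^ 2 - ‖x (k + 1) - xs k‖ ^ 2) / (2 * α) + α * C ^ 2 / 2 := by
    intro k hk
    have hdescent := two_mul_inner_le_of_isMinOn hX (hproj k hk).1 (hproj k hk).2 (hxs k hk)
    have hGk : α ^ 2 * ‖G k‖ ^ 2 ≤ α ^ 2 * C ^ 2 := by gcongr; exact hG k hk
    rw [div_add' _ _ _ (by positivity), le_div_iff₀ (by positivity)]
    nlinarith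
  have hdrift : ∀ k ∈ Icc 1 n, ‖x (k + 1) - xs (k + 1)‖ ^ 2 ≤
      ‖x (k + 1) - xs k‖ ^ 2 + 2 * D * ‖xs k - xs (k + 1)‖ := by
    intro k hk
    rw [mem_Icc] at hk
    have hxk := (hproj k (by rw [mem_Icc]; omega)).1
    exact sq_norm_sub_le_sq_norm_sub_add (hdiam _ hxk _ (hxs k (by rw [mem_Icc]; omega)))
      (hdiam _ hxk _ (hxs (k + 1) (by rw [mem_Icc]; omega)))
  have htele := sum_Icc_sub_le_of_le_add (fun k => ‖x k - xs k‖ ^ 2)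
    (fun k => ‖x (k + 1) - xs k‖ ^ 2) (fun k => 2 * D * ‖xs k - xs (k + 1)‖) n hdrift
  rw [← mul_sum] at htele
  have hstart : ‖x 1 - xs 1‖ ^ 2 ≤ D ^ 2 :=
    pow_le_pow_left₀ (norm_nonneg _) (hdiam _ hx₁ _ (hxs 1 (by simp))) 2
  calc ∑ k ∈ Icc 1 (n + 1), ⟪G k, x k - xs k⟫
      ≤ ∑ k ∈ Icc 1 (n + 1),
          ((‖x k - xs k‖ ^ 2 - ‖x (k + 1) - xs k‖ ^ 2) / (2 * α) + α * C ^ 2 / 2) :=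
        sum_le_sum hstep
    _ = (∑ k ∈ Icc 1 (n + 1), (‖x k - xs k‖ ^ 2 - ‖x (k + 1) - xs k‖ ^ 2)) / (2 * α) +
          ((n + 1 : ℕ) : ℝ) * (α * C ^ 2 / 2) := by
        rw [sum_add_distrib, ← sum_div, sum_const, Nat.card_Icc, nsmul_eq_mul, Nat.add_sub_cancel]
    _ ≤ _ := by
        gcongr
        nlinarith [sq_nonneg ‖x (n + 1 + 1) - xs (n + 1)‖]

end InnerProductSpace

theorem div_add_mul_eq_mul_sqrt_of_balanced_step {Q C K : ℝ} (hQ : 0 < Q) (hC : 0 < C)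
    (hK : 0 < K) :
    Q / (2 * (√Q / (C * √K))) + K * (√Q / (C * √K) * C ^ 2 / 2) = C * √(K * Q) := by
  have hsQ := Real.sq_sqrt hQ.le
  have hsK := Real.sq_sqrt hK.le
  have : 0 < √Q := Real.sqrt_pos.2 hQ
  have : 0 < √K := Real.sqrt_pos.2 hK
  rw [Real.sqrt_mul hK.le]
  field_simp
  nth_rewrite 1 [← hsQ]
  nth_rewrite 2 [← hsK]
  ring

theorem stmt_12_general (d K : ℕ) (hK : 1 ≤ K)
    (X : Set (EuclideanSpace ℝ (Fin d)))
    (hXconv : Convex ℝ X)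
    (D' C PK : ℝ) (hD' : 0 < D') (hC : 0 < C)
    (hdiam : ∀ x ∈ X, ∀ y ∈ X, ‖x - y‖ ≤ D')
    (f : ℕ → EuclideanSpace ℝ (Fin d) → ℝ)
    (g : ℕ → EuclideanSpace ℝ (Fin d) → EuclideanSpace ℝ (Fin d))
    (hconv : ∀ k, ConvexOn ℝ Set.univ (f k))
    (hgrad : ∀ k y, HasGradientAt (f k) (g k y) y)
    (x xs : ℕ → EuclideanSpace ℝ (Fin d))
    (hmem : ∀ k ∈ Finset.Icc 1 K, x k ∈ X)
    (hmemxs : ∀ k ∈ Finset.Icc 1 K, xs k ∈ X)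
    (hpath : ∑ k ∈ Finset.Icc 1 (K - 1), ‖xs k - xs (k + 1)‖ ≤ PK)
    (hgb : ∀ k ∈ Finset.Icc 1 K, ‖g k (x k)‖ ≤ C)
    (α : ℝ) (hstep : α = Real.sqrt (D' * (D' + 3 * PK)) / (C * Real.sqrt K))
    (hproj : ∀ k ∈ Finset.Icc 1 K, x (k + 1) ∈ X ∧
      ∀ y ∈ X, ‖x (k + 1) - (x k - α • g k (x k))‖ ≤ ‖y - (x k - α • g k (x k))‖) :
    ∑ k ∈ Finset.Icc 1 K, f k (x k) - ∑ k ∈ Finset.Icc 1 K, f k (xs k) ≤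
      C * Real.sqrt (K * (D' * (D' + 3 * PK))) := by
  have hPK : 0 ≤ PK := (sum_nonneg fun _ _ => norm_nonneg _).trans hpath
  have hQ : 0 < D' * (D' + 3 * PK) := by positivity
  have hKpos : (0 : ℝ) < K := by exact_mod_cast hK
  have hα : 0 < α := by rw [hstep]; positivity
  have hlinear := sum_inner_le_of_isMinOn hK hXconv hdiam hα (hmem 1 (by simp [hK])) hmemxs hgb
    fun k hk => ⟨(hproj k hk).1, isMinOn_iff.2 (hproj k hk).2⟩
  calc ∑ k ∈ Icc 1 K, f k (x k) - ∑ k ∈ Icc 1 K, f k (xs k)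
      = ∑ k ∈ Icc 1 K, (f k (x k) - f k (xs k)) := (sum_sub_distrib ..).symm
    _ ≤ ∑ k ∈ Icc 1 K, ⟪g k (x k), x k - xs k⟫ := sum_le_sum fun k _ =>
        (hconv k).sub_le_inner_of_hasGradientAt trivial trivial (hgrad k (x k))
    _ ≤ D' * (D' + 3 * PK) / (2 * α) + K * (α * C ^ 2 / 2) := by
        refine hlinear.trans ?_
        gcongr
        nlinarith [mul_le_mul_of_nonneg_left hpath hD'.le]
    _ = C * Real.sqrt (K * (D' * (D' + 3 * PK))) := by
        rw [hstep]; exact div_add_mul_eq_mul_sqrt_of_balanced_step hQ hC hKpos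

theorem stmt_12 (d K : ℕ) (hK : 1 ≤ K)
    (X : Set (EuclideanSpace ℝ (Fin d))) (hXne : X.Nonempty) (hXcl : IsClosed X)
    (hXconv : Convex ℝ X)
    (D' C PK : ℝ) (hD' : 0 < D') (hC : 0 < C)
    (hdiam : ∀ x ∈ X, ∀ y ∈ X, ‖x - y‖ ≤ D')
    (f : ℕ → EuclideanSpace ℝ (Fin d) → ℝ)
    (g : ℕ → EuclideanSpace ℝ (Fin d) → EuclideanSpace ℝ (Fin d))
    (hconv : ∀ k, ConvexOn ℝ Set.univ (f k))
    (hgrad : ∀ k y, HasGradientAt (f k) (g k y) y)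
    (x xs : ℕ → EuclideanSpace ℝ (Fin d))
    (hmem : ∀ k ∈ Finset.Icc 1 K, x k ∈ X)
    (hmemxs : ∀ k ∈ Finset.Icc 1 K, xs k ∈ X)
    (hpath : ∑ k ∈ Finset.Icc 1 (K - 1), ‖xs k - xs (k + 1)‖ ≤ PK)
    (hgb : ∀ k ∈ Finset.Icc 1 K, ‖g k (x k)‖ ≤ C)
    (α : ℝ) (hstep : α = Real.sqrt (D' * (D' + 3 * PK)) / (C * Real.sqrt K))
    (hproj : ∀ k ∈ Finset.Icc 1 K, x (k + 1) ∈ X ∧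
      ∀ y ∈ X, ‖x (k + 1) - (x k - α • g k (x k))‖ ≤ ‖y - (x k - α • g k (x k))‖) :
    ∑ k ∈ Finset.Icc 1 K, f k (x k) - ∑ k ∈ Finset.Icc 1 K, f k (xs k) ≤
      C * Real.sqrt (K * (D' * (D' + 3 * PK))) :=
  stmt_12_general d K hK X hXconv D' C PK hD' hC hdiam f g hconv hgrad x xs hmem hmemxs hpath hgb α
    hstep hproj
end

section
/- Let f, r: ℝ^N → ℝ be differentiable, and suppose there exist G > 0 and R > 0 such that for all x, y with f(x) ≥ f(y): f(x) − f(y) ≤ G·∇f(x)ᵀ(x − y)/‖∇f(x)‖ (taking ∇f(x)/‖∇f(x)‖ = 0 when ∇f(x) = 0), and similarly r(x) − r(y) ≤ R·∇r(x)ᵀ(x − y)/‖∇r(x)‖. Fix â > 0 and b > 0 with R ≤ b·â, and let ζ = max{G, b}. Then for all x, y with f(x) ≥ f(y) and r(x) ≥ r(y), (f + r)(x) − (f + r)(y) ≤ ζ·(∇f(x)/‖∇f(x)‖ + â·∇r(x)/‖∇r(x)‖)ᵀ(x − y). -/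
lemma le_mul_of_le_mul_of_le_of_nonneg {u c ζ t : ℝ} (hu : 0 ≤ u) (hc : 0 < c)
    (h : u ≤ c * t) (hcζ : c ≤ ζ) : u ≤ ζ * t :=
  h.trans (mul_le_mul_of_nonneg_right hcζ (nonneg_of_mul_nonneg_right (hu.trans h) hc))

lemma inner_inv_norm_smul_add_smul_inv_norm_smul {E : Type*} [NormedAddCommGroup E]
    [InnerProductSpace ℝ E] (u v w : E) (a : ℝ) :
    inner ℝ (‖u‖⁻¹ • u + a • ‖v‖⁻¹ • v) w = inner ℝ u w / ‖u‖ + a * (inner ℝ v w / ‖v‖) := by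
  rw [inner_add_left, real_inner_smul_left, real_inner_smul_left, real_inner_smul_left]
  ring

theorem stmt_13_general (N : ℕ)
    (f r : EuclideanSpace ℝ (Fin N) → ℝ)
    (gf gr : EuclideanSpace ℝ (Fin N) → EuclideanSpace ℝ (Fin N))
    (G R : ℝ) (hG : 0 < G) (hR : 0 < R)
    (hf : ∀ x y, f y ≤ f x → f x - f y ≤ G * (inner ℝ (gf x) (x - y) / ‖gf x‖))
    (hr : ∀ x y, r y ≤ r x → r x - r y ≤ R * (inner ℝ (gr x) (x - y) / ‖gr x‖))
    (ahat b : ℝ) (hahat : 0 < ahat) (hRba : R ≤ b * ahat) :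
    ∀ x y, f y ≤ f x → r y ≤ r x →
      (f x + r x) - (f y + r y) ≤
        max G b *
          (inner ℝ ((‖gf x‖)⁻¹ • gf x + ahat • (‖gr x‖)⁻¹ • gr x) (x - y) : ℝ) := by
  intro x y hfxy hrxy
  have hf' : f x - f y ≤ max G b * (inner ℝ (gf x) (x - y) / ‖gf x‖) :=
    le_mul_of_le_mul_of_le_of_nonneg (sub_nonneg.2 hfxy) hG (hf x y hfxy) (le_max_left G b)
  have hr' : r x - r y ≤ max G b * ahat * (inner ℝ (gr x) (x - y) / ‖gr x‖) :=
    le_mul_of_le_mul_of_le_of_nonneg (sub_nonneg.2 hrxy) hR (hr x y hrxy)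
      (hRba.trans (mul_le_mul_of_nonneg_right (le_max_right G b) hahat.le))
  rw [inner_inv_norm_smul_add_smul_inv_norm_smul]
  linarith

theorem stmt_13 (N : ℕ)
    (f r : EuclideanSpace ℝ (Fin N) → ℝ)
    (gf gr : EuclideanSpace ℝ (Fin N) → EuclideanSpace ℝ (Fin N))
    (hgf : ∀ x, HasGradientAt f (gf x) x) (hgr : ∀ x, HasGradientAt r (gr x) x)
    (G R : ℝ) (hG : 0 < G) (hR : 0 < R)
    (hf : ∀ x y, f y ≤ f x → f x - f y ≤ G * (inner ℝ (gf x) (x - y) / ‖gf x‖))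
    (hr : ∀ x y, r y ≤ r x → r x - r y ≤ R * (inner ℝ (gr x) (x - y) / ‖gr x‖))
    (ahat b : ℝ) (hahat : 0 < ahat) (hb : 0 < b) (hRba : R ≤ b * ahat) :
    ∀ x y, f y ≤ f x → r y ≤ r x →
      (f x + r x) - (f y + r y) ≤
        max G b *
          (inner ℝ ((‖gf x‖)⁻¹ • gf x + ahat • (‖gr x‖)⁻¹ • gr x) (x - y) : ℝ) :=
  stmt_13_general N f r gf gr G R hG hR hf hr ahat b hahat hRba
end

section
/- Let X ⊆ ℝ^N, let F: X → ℝ, let σ ∈ ℝ^N, let h > 0, let e_i be the i-th standard basis vector, and let ρ, β ≥ 0. Suppose x ∈ X satisfies F(x) − σᵀx ≤ inf_{y∈X} (F(y) − σᵀy) + (ρ + β‖σ‖₁), and x' ∈ X satisfies F(x') − (σ + h e_i)ᵀx' ≤ inf_{y∈X} (F(y) − (σ + h e_i)ᵀy) + (ρ + β‖σ + h e_i‖₁), where all coordinates of σ are nonnegative. Then x'_i ≥ x_i − 2(ρ + β‖σ‖₁)/h − β. -/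
/-! Adding the two approximate-optimality inequalities, each tested at the other point, cancels
`F` and `σ` and leaves `h (x_i - x'_i) ≤ ε + ε'`, where `ε' = ε + β h` because the
perturbation `h e_i` raises the `ℓ¹` norm of the nonnegative `σ` by exactly `h`. -/

open Finset

theorem sub_div_le_of_approxMinOn_tilt {α : Type*} {s : Set α} {G g : α → ℝ} {h ε ε' : ℝ}
    (hh : 0 < h) {x x' : α} (hx : x ∈ s) (hx' : x' ∈ s)
    (hmin : ∀ y ∈ s, G x ≤ G y + ε)
    (hmin' : ∀ y ∈ s, G x' - h * g x' ≤ G y - h * g y + ε') :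
    g x - (ε + ε') / h ≤ g x' := by
  have key : h * (g x - g x') ≤ ε + ε' := by
    linarith [hmin x' hx', hmin' x hx]
  rw [sub_le_comm, le_div_iff₀ hh]
  linarith

theorem dotProduct_add_smul_single {N : ℕ} (σ y : Fin N → ℝ) (h : ℝ) (i : Fin N) :
    (σ + h • Pi.single i 1) ⬝ᵥ y = σ ⬝ᵥ y + h * y i := by
  rw [add_dotProduct, smul_dotProduct, single_dotProduct, one_mul, smul_eq_mul]

theorem sum_abs_add_smul_single {N : ℕ} {σ : Fin N → ℝ} (hσ : ∀ j, 0 ≤ σ j) {h : ℝ}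
    (hh : 0 ≤ h) (i : Fin N) :
    ∑ j, |(σ + h • (Pi.single i 1 : Fin N → ℝ)) j| = ∑ j, |σ j| + h := by
  have hnonneg : 0 ≤ σ + h • (Pi.single i 1 : Fin N → ℝ) :=
    add_nonneg (fun j => hσ j) (smul_nonneg hh (Pi.single_nonneg.mpr zero_le_one))
  simp_rw [abs_of_nonneg (hnonneg _), abs_of_nonneg (hσ _), Pi.add_apply, sum_add_distrib,
    Pi.smul_apply, ← smul_sum, sum_pi_single', if_pos (mem_univ i), smul_eq_mul, mul_one]

theorem stmt_16_general (N : ℕ) (X : Set (Fin N → ℝ))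
    (F : (Fin N → ℝ) → ℝ) (σ : Fin N → ℝ) (hσ : ∀ i, 0 ≤ σ i)
    (h : ℝ) (hh : 0 < h) (i : Fin N) (ρ β : ℝ)
    (x x' : Fin N → ℝ) (hx : x ∈ X) (hx' : x' ∈ X)
    (hor : ∀ y ∈ X,
      F x - dotProduct σ x ≤
        F y - dotProduct σ y + (ρ + β * ∑ j, |σ j|))
    (hor' : ∀ y ∈ X,
      F x' - dotProduct (σ + h • (Pi.single i 1 : Fin N → ℝ)) x' ≤
        F y - dotProduct (σ + h • (Pi.single i 1 : Fin N → ℝ)) y +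
          (ρ + β * ∑ j, |(σ + h • (Pi.single i 1 : Fin N → ℝ)) j|)) :
    x i - 2 * (ρ + β * ∑ j, |σ j|) / h - β ≤ x' i := by
  set ε := ρ + β * ∑ j, |σ j|
  have hmin' : ∀ y ∈ X,
      (F x' - σ ⬝ᵥ x') - h * x' i ≤ (F y - σ ⬝ᵥ y) - h * y i + (ε + β * h) := by
    intro y hy
    have hy' := hor' y hy
    rw [sum_abs_add_smul_single hσ hh.le, dotProduct_add_smul_single,
      dotProduct_add_smul_single] at hy'
    linarith
  have hmono := sub_div_le_of_approxMinOn_tilt (G := fun y => F y - σ ⬝ᵥ y) (g := fun y => y i)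
    hh hx hx' hor hmin'
  have hsplit : (ε + (ε + β * h)) / h = 2 * ε / h + β := by
    field_simp
    ring
  rw [hsplit] at hmono
  linarith

theorem stmt_16 (N : ℕ) (X : Set (Fin N → ℝ)) (hXne : X.Nonempty)
    (F : (Fin N → ℝ) → ℝ) (σ : Fin N → ℝ) (hσ : ∀ i, 0 ≤ σ i)
    (h : ℝ) (hh : 0 < h) (i : Fin N) (ρ β : ℝ) (hρ : 0 ≤ ρ) (hβ : 0 ≤ β)
    (x x' : Fin N → ℝ) (hx : x ∈ X) (hx' : x' ∈ X)
    (hor : ∀ y ∈ X,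
      F x - dotProduct σ x ≤
        F y - dotProduct σ y + (ρ + β * ∑ j, |σ j|))
    (hor' : ∀ y ∈ X,
      F x' - dotProduct (σ + h • (Pi.single i 1 : Fin N → ℝ)) x' ≤
        F y - dotProduct (σ + h • (Pi.single i 1 : Fin N → ℝ)) y +
          (ρ + β * ∑ j, |(σ + h • (Pi.single i 1 : Fin N → ℝ)) j|)) :
    x i - 2 * (ρ + β * ∑ j, |σ j|) / h - β ≤ x' i :=
  stmt_16_general N X F σ hσ h hh i ρ β x x' hx hx' hor hor'
end
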